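/- arXiv:1910.01072 — 4 statements merged into one kernel-verified Lean document; each statement's English description precedes it below -/
import Mathlib

section
/- For any integers r and χ with 2 ≤ χ ≤ r + 1, there exists a finite simple graph G that is r-regular and has chromatic number exactly χ. -/
/-!
For `χ ≤ r + 1` put `t = r + 1 - χ` and take the box product `K_χ □ B`, where `B` is the
bipartite double cover of `K_(t+1)`, i.e. `K_(t+1,t+1)` minus a perfect matching. Degrees add
under `□`, giving `(χ - 1) + t = r`. The copies of `K_χ` force `χ` colours, and `χ` colours
suffice: add (in `Fin χ`) a `χ`-colouring of `K_χ` to a `2`-colouring of `B`.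
-/

namespace SimpleGraph

variable {V W : Type*}

theorem ncard_neighborSet_eq_degree (G : SimpleGraph V) (v : V) [Fintype (G.neighborSet v)] :
    (G.neighborSet v).ncard = G.degree v := by
  rw [← Nat.card_coe_set_eq, Nat.card_eq_fintype_card, card_neighborSet_eq_degree]

theorem Iso.ncard_neighborSet_eq {G : SimpleGraph V} {G' : SimpleGraph W} (f : G ≃g G') (v : V) :
    (G'.neighborSet (f v)).ncard = (G.neighborSet v).ncard := by
  rw [← Nat.card_coe_set_eq, ← Nat.card_coe_set_eq, Nat.card_congr (f.mapNeighborSet v)]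

theorem neighborSet_bipartiteDoubleCover_inl (G : SimpleGraph V) (v : V) :
    G.bipartiteDoubleCover.neighborSet (.inl v) = .inr '' G.neighborSet v := by
  ext (w | w) <;> simp

theorem neighborSet_bipartiteDoubleCover_inr (G : SimpleGraph V) (v : V) :
    G.bipartiteDoubleCover.neighborSet (.inr v) = .inl '' G.neighborSet v := by
  ext (w | w) <;> simp

theorem IsRegularOfDegree.bipartiteDoubleCover [Fintype V] {G : SimpleGraph V} [DecidableRel G.Adj]
    {d : ℕ} (h : G.IsRegularOfDegree d) : G.bipartiteDoubleCover.IsRegularOfDegree d := by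
  rintro (v | v)
  · rw [← ncard_neighborSet_eq_degree, neighborSet_bipartiteDoubleCover_inl,
      Set.ncard_image_of_injective _ Sum.inr_injective, ncard_neighborSet_eq_degree, h.degree_eq]
  · rw [← ncard_neighborSet_eq_degree, neighborSet_bipartiteDoubleCover_inr,
      Set.ncard_image_of_injective _ Sum.inl_injective, ncard_neighborSet_eq_degree, h.degree_eq]

theorem IsRegularOfDegree.boxProd [Fintype V] [Fintype W] {G : SimpleGraph V} {H : SimpleGraph W}
    [DecidableRel G.Adj] [DecidableRel H.Adj] {d e : ℕ} (hG : G.IsRegularOfDegree d)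
    (hH : H.IsRegularOfDegree e) : (G □ H).IsRegularOfDegree (d + e) := by
  intro x
  rw [degree_boxProd, hG.degree_eq, hH.degree_eq]

theorem Colorable.boxProd {G : SimpleGraph V} {H : SimpleGraph W} {n : ℕ} (hG : G.Colorable n)
    (hH : H.Colorable n) : (G □ H).Colorable n := by
  obtain _ | n := n
  · have := hG.isEmpty
    exact colorable_zero_iff.mpr inferInstance
  obtain ⟨c⟩ := hG
  obtain ⟨d⟩ := hH
  refine ⟨Coloring.mk (fun x => c x.1 + d x.2) ?_⟩
  rintro ⟨a, b⟩ ⟨a', b'⟩ (⟨hadj, rfl⟩ | ⟨hadj, rfl⟩)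
  · simpa using c.valid hadj
  · simpa using d.valid hadj

theorem chromaticNumber_boxProd_of_colorable [Nonempty W] {G : SimpleGraph V} {H : SimpleGraph W}
    {n : ℕ} (hG : G.chromaticNumber = n) (hH : H.Colorable n) : (G □ H).chromaticNumber = n := by
  refine le_antisymm ?_ ?_
  · exact chromaticNumber_le_iff_colorable.mpr
      ((chromaticNumber_le_iff_colorable.mp hG.le).boxProd hH)
  · exact hG ▸ chromaticNumber_mono_of_hom (boxProdLeft G H (Classical.arbitrary W)).toHom

end SimpleGraph

open SimpleGraph

/-- For any integers `r` and `χ` with `2 ≤ χ ≤ r + 1`, there exists a finite simple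
graph that is `r`-regular and has chromatic number exactly `χ`. -/
theorem exists_regular_graph_with_chromaticNumber (r χ : ℕ)
    (h2 : 2 ≤ χ) (hr : χ ≤ r + 1) :
    ∃ (n : ℕ) (G : SimpleGraph (Fin n)),
      (∀ v, (G.neighborSet v).ncard = r) ∧ G.chromaticNumber = χ := by
  let G := (⊤ : SimpleGraph (Fin χ)) □ (⊤ : SimpleGraph (Fin (r + 1 - χ + 1))).bipartiteDoubleCover
  have hreg : G.IsRegularOfDegree r := by
    have := (IsRegularOfDegree.top (V := Fin χ)).boxProd
      (IsRegularOfDegree.top (V := Fin (r + 1 - χ + 1))).bipartiteDoubleCover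
    rwa [Fintype.card_fin, Fintype.card_fin, Nat.add_sub_cancel,
      show χ - 1 + (r + 1 - χ) = r by omega] at this
  have hchrom : G.chromaticNumber = χ := by
    refine chromaticNumber_boxProd_of_colorable ?_ (isBipartite_bipartiteDoubleCover.mono h2)
    rw [chromaticNumber_top, Fintype.card_fin]
  let e := G.overFinIso rfl
  refine ⟨_, G.overFin rfl, fun v => ?_, ?_⟩
  · rw [← e.apply_symm_apply v, e.ncard_neighborSet_eq, ncard_neighborSet_eq_degree, hreg.degree_eq]
  · rw [← chromaticNumber_congr e, hchrom]
end

section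
/- A χ-colorable simple graph on n vertices has at most ⌊(χ−1)n²/(2χ)⌋ edges. -/
set_option maxHeartbeats 800000

open Finset

/-- A `χ`-colorable simple graph on `n` vertices has at most
`⌊(χ−1)·n²/(2χ)⌋` edges (the Turán bound). -/
theorem card_edges_le_of_colorable {V : Type*} [Fintype V]
    (G : SimpleGraph V) [DecidableRel G.Adj] (χ : ℕ) (hχ : 1 ≤ χ)
    (hcol : G.Colorable χ) :
    G.edgeFinset.card ≤ (χ - 1) * (Fintype.card V) ^ 2 / (2 * χ) := by
  classical
  obtain ⟨c⟩ := hcol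
  set n := Fintype.card V
  set f : Fin χ → ℕ := fun i => #{v : V | c v = i} with hf
  -- same-color pairs count
  have hsame : #(univ.filter fun p : V × V => c p.1 = c p.2) = ∑ i, f i ^ 2 := by
    have : (univ.filter fun p : V × V => c p.1 = c p.2)
        = univ.biUnion (fun i : Fin χ =>
            ({v : V | c v = i} : Finset V) ×ˢ ({v : V | c v = i} : Finset V)) := by
      ext ⟨x, y⟩
      simp only [mem_filter, mem_univ, true_and, mem_biUnion, mem_product, mem_filter]
      constructor
      · intro h; exact ⟨c x, rfl, h.symm⟩
      · rintro ⟨i, hx, hy⟩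
        rw [hx, hy]
    rw [this, card_biUnion]
    · simp [f, sq, card_product]
    · intro i _ j _ hij
      simp only [disjoint_left]
      rintro ⟨x, y⟩ hx hy
      simp only [mem_product, mem_filter, mem_univ, true_and] at hx hy
      exact hij (hx.1 ▸ hy.1 ▸ rfl)
  have hsum : ∑ i, f i = n := by
    have := Finset.card_eq_sum_card_fiberwise
      (f := c) (s := (univ : Finset V)) (t := (univ : Finset (Fin χ)))
      (fun x _ => mem_univ _)
    simpa [n, f, card_univ] using this.symm
  -- adjacency pairs and same-color pairs are disjoint subsets of univ
  have hkey : 2 * #G.edgeFinset + ∑ i, f i ^ 2 ≤ n ^ 2 := by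
    rw [G.two_mul_card_edgeFinset, ← hsame]
    have hd : Disjoint (univ.filter fun p : V × V => G.Adj p.1 p.2)
        (univ.filter fun p : V × V => c p.1 = c p.2) := by
      simp only [disjoint_left, mem_filter, mem_univ, true_and]
      intro p hadj heq
      exact c.valid hadj heq
    calc #(univ.filter fun (x, y) => G.Adj x y)
          + #(univ.filter fun p : V × V => c p.1 = c p.2)
        = #((univ.filter fun p : V × V => G.Adj p.1 p.2)
            ∪ (univ.filter fun p : V × V => c p.1 = c p.2)) := (card_union_of_disjoint hd).symm
      _ ≤ #(univ : Finset (V × V)) := card_le_card (subset_univ _)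
      _ = n ^ 2 := by simp [sq, n, card_univ]
  -- Cauchy-Schwarz: n^2 ≤ χ * ∑ f i ^ 2
  have hcs : n ^ 2 ≤ χ * ∑ i, f i ^ 2 := by
    have := sq_sum_le_card_mul_sum_sq (s := (univ : Finset (Fin χ))) (f := fun i => (f i : ℤ))
    have h2 : ((n : ℤ)) ^ 2 ≤ (χ : ℤ) * ∑ i, (f i : ℤ) ^ 2 := by
      simpa [← Nat.cast_sum, hsum] using this
    exact_mod_cast h2
  -- combine
  rw [Nat.le_div_iff_mul_le (by positivity)]
  have : #G.edgeFinset * (2 * χ) = χ * (2 * #G.edgeFinset) := by ring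
  rw [this]
  have h1 : χ * (2 * #G.edgeFinset) + χ * ∑ i, f i ^ 2 ≤ χ * n ^ 2 := by
    rw [← Nat.mul_add]
    exact Nat.mul_le_mul_left χ hkey
  have h2 : χ * (2 * #G.edgeFinset) + n ^ 2 ≤ χ * n ^ 2 :=
    le_trans (by omega) h1
  have : (χ - 1) * n ^ 2 = χ * n ^ 2 - n ^ 2 := by
    rw [Nat.sub_mul, one_mul]
  omega
end

section
/- For every k ≥ 4, there is no (2k−4)-regular simple graph with chromatic number k on 2k−2 vertices; hence every (2k−4|k)-graph has at least 2k−1 vertices and the complement of C_{2k−1} is extremal. -/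
/-!
If `G` is `(2k-4)`-regular on `2k-2` vertices, its complement is a perfect matching, and giving
both ends of each matching edge the same colour properly colours `G` with `k-1` colours. On
`2k-3` vertices `G` would be complete, of chromatic number `2k-3 ≠ k`, and fewer vertices cannot
carry degree `2k-4`. On the other hand `C_{2k-1}` is triangle-free, so a colour class of its
complement has at most two vertices and at least `k` colours are needed; colouring the pairs
`{2i, 2i+1}` of consecutive vertices alike uses exactly `k`.
-/

open Finset SimpleGraph

theorem Fin.val_sub_cases {n : ℕ} (a b : Fin n) :
    (a - b).val = a.val - b.val ∧ b ≤ a ∨ (a - b).val = n + a.val - b.val ∧ a < b := by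
  rcases le_or_gt b a with h | h
  · exact .inl ⟨Fin.coe_sub_iff_le.mpr h, h⟩
  · exact .inr ⟨Fin.coe_sub_iff_lt.mpr h, h⟩

namespace SimpleGraph

variable {V : Type*} {G : SimpleGraph V}

theorem IsClique.card_lt_of_cliqueFree {n : ℕ} {s : Finset V} (hG : G.CliqueFree n)
    (hs : G.IsClique (s : Set V)) : #s < n := by
  by_contra! h
  exact hG.mono h s ⟨hs, rfl⟩

section Finite

variable [Fintype V]

theorem isRegularOfDegree_of_ncard_neighborSet [DecidableRel G.Adj] {d : ℕ}
    (h : ∀ v, (G.neighborSet v).ncard = d) : G.IsRegularOfDegree d := fun v => by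
  rw [← card_neighborFinset_eq_degree, neighborFinset, ← Set.ncard_eq_toFinset_card']
  exact h v

theorem card_le_mul_of_cliqueFree_of_colorable_compl {m c : ℕ} (hG : G.CliqueFree (m + 1))
    (hc : Gᶜ.Colorable c) : Fintype.card V ≤ m * c := by
  classical
  obtain ⟨C⟩ := hc
  have hclass : ∀ a, #{v | C v = a} ≤ m := fun a => Nat.lt_succ_iff.mp <|
    IsClique.card_lt_of_cliqueFree hG <| (G.isIndepSet_compl).mp <| by
      simpa [Coloring.colorClass] using C.isIndepSet_colorClass a
  calc Fintype.card V = ∑ a : Fin c, #{v | C v = a} :=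
        card_eq_sum_card_fiberwise fun v _ => mem_univ (C v)
    _ ≤ ∑ _a : Fin c, m := sum_le_sum fun a _ => hclass a
    _ = m * c := by simp [mul_comm]

theorem colorable_compl_card_edgeFinset [DecidableRel G.Adj] (h : ∀ v, ∃ w, G.Adj v w) :
    Gᶜ.Colorable #G.edgeFinset := by
  choose f hf using h
  rw [edgeFinset_card]
  refine (Coloring.mk (fun v => (⟨s(v, f v), hf v⟩ : G.edgeSet)) ?_).colorable
  intro u v huv heq
  obtain ⟨rfl, -⟩ | ⟨-, hv⟩ := Sym2.eq_iff.mp (congrArg Subtype.val heq)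
  · exact huv.ne rfl
  · exact ((compl_adj G u v).mp huv).2 (hv ▸ hf u)

theorem IsRegularOfDegree.two_mul_card_edgeFinset [DecidableRel G.Adj] {d : ℕ}
    (h : G.IsRegularOfDegree d) : 2 * #G.edgeFinset = Fintype.card V * d := by
  classical
  simp [← sum_degrees_eq_twice_card_edges, h.degree_eq]

theorem IsRegularOfDegree.colorable_compl_of_one [DecidableRel G.Adj]
    (h : G.IsRegularOfDegree 1) : Gᶜ.Colorable (Fintype.card V / 2) := by
  have hedges := h.two_mul_card_edgeFinset
  have hcol := colorable_compl_card_edgeFinset fun v =>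
    (G.degree_pos_iff_exists_adj v).mp (by rw [h.degree_eq]; exact one_pos)
  rwa [show #G.edgeFinset = Fintype.card V / 2 by omega] at hcol

theorem IsRegularOfDegree.colorable_of_card_sub_two [DecidableEq V] [DecidableRel G.Adj]
    (hV : 2 ≤ Fintype.card V) (h : G.IsRegularOfDegree (Fintype.card V - 2)) :
    G.Colorable (Fintype.card V / 2) := by
  have h1 : Gᶜ.IsRegularOfDegree 1 := by
    simpa [show Fintype.card V - 1 - (Fintype.card V - 2) = 1 by omega] using h.compl
  simpa using h1.colorable_compl_of_one

theorem IsRegularOfDegree.eq_top_of_card_sub_one [DecidableEq V] [DecidableRel G.Adj]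
    (h : G.IsRegularOfDegree (Fintype.card V - 1)) : G = ⊤ := by
  have h0 : Gᶜ.IsRegularOfDegree 0 := by simpa using h.compl
  rw [← compl_eq_bot]
  ext u v
  simpa using (Gᶜ.degree_eq_zero u).mp (h0 u) v

theorem IsRegularOfDegree.two_mul_sub_one_le_card_of_chromaticNumber_eq [DecidableRel G.Adj]
    {k : ℕ} (hk : 4 ≤ k) (h : G.IsRegularOfDegree (2 * k - 4)) (hχ : G.chromaticNumber = k) :
    2 * k - 1 ≤ Fintype.card V := by
  classical
  have : Nonempty V := by
    rw [← not_isEmpty_iff, ← chromaticNumber_eq_zero_iff, hχ]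
    exact_mod_cast (by omega : k ≠ 0)
  have hdeg := G.degree_lt_card_verts (Classical.arbitrary V)
  rw [h.degree_eq] at hdeg
  by_contra! hcard
  obtain hV | hV : Fintype.card V = 2 * k - 3 ∨ Fintype.card V = 2 * k - 2 := by omega
  · have htop : G = ⊤ := IsRegularOfDegree.eq_top_of_card_sub_one <| by
      rwa [hV, show 2 * k - 3 - 1 = 2 * k - 4 by omega]
    rw [htop, chromaticNumber_top, hV, Nat.cast_inj] at hχ
    omega
  · have hcol : G.Colorable (Fintype.card V / 2) := IsRegularOfDegree.colorable_of_card_sub_two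
      (by omega) (by rwa [hV, show 2 * k - 2 - 2 = 2 * k - 4 by omega])
    have := hχ ▸ hcol.chromaticNumber_le
    norm_cast at this
    omega

end Finite

theorem val_eq_of_cycleGraph_adj {n : ℕ} {u v : Fin n} (h : (cycleGraph n).Adj u v) :
    u.val + 1 = v.val ∨ v.val + 1 = u.val ∨ (u.val = 0 ∧ v.val + 1 = n) ∨
      (v.val = 0 ∧ u.val + 1 = n) := by
  rw [cycleGraph_adj'] at h
  have := u.isLt
  have := v.isLt
  have := Fin.val_sub_cases u v
  have := Fin.val_sub_cases v u
  simp only [Fin.le_def, Fin.lt_def] at *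
  omega

theorem cycleGraph_cliqueFree_three {n : ℕ} (hn : 4 ≤ n) : (cycleGraph n).CliqueFree 3 := by
  intro s hs
  obtain ⟨a, b, c, hab, hac, hbc, -⟩ := is3Clique_iff.mp hs
  have := val_eq_of_cycleGraph_adj hab
  have := val_eq_of_cycleGraph_adj hac
  have := val_eq_of_cycleGraph_adj hbc
  omega

theorem colorable_compl_pathGraph (n : ℕ) : (pathGraph n)ᶜ.Colorable ((n + 1) / 2) :=
  ⟨Coloring.mk (fun v => ⟨v.val / 2, by omega⟩) fun {u v} huv heq => by
    rw [compl_adj, pathGraph_adj, Ne, Fin.ext_iff] at huv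
    rw [Fin.mk.injEq] at heq
    omega⟩

theorem chromaticNumber_compl_cycleGraph {n : ℕ} (hn : 4 ≤ n) :
    (cycleGraph n)ᶜ.chromaticNumber = ((n + 1) / 2 : ℕ) := by
  refine le_antisymm ?_ (le_chromaticNumber_iff_colorable.mpr fun c hc => ?_)
  · exact ((colorable_compl_pathGraph n).mono_left
      (compl_le_compl pathGraph_le_cycleGraph)).chromaticNumber_le
  · have := card_le_mul_of_cliqueFree_of_colorable_compl (cycleGraph_cliqueFree_three hn) hc
    rw [Fintype.card_fin] at this
    omega

theorem isRegularOfDegree_compl_cycleGraph {n : ℕ} (hn : 3 ≤ n) :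
    (cycleGraph n)ᶜ.IsRegularOfDegree (n - 3) := by
  obtain ⟨m, rfl⟩ : ∃ m, n = m + 3 := ⟨n - 3, by omega⟩
  have hcycle : (cycleGraph (m + 3)).IsRegularOfDegree 2 := fun _ => cycleGraph_degree_three_le
  simpa using hcycle.compl

end SimpleGraph

/-- For every `k ≥ 4`, there is no `(2k−4)`-regular simple graph with chromatic
number `k` on `2k−2` vertices; hence every `(2k−4|k)`-graph has at least `2k−1`
vertices, and the complement of `C_{2k−1}`, being such a graph on `2k−1` vertices,
is extremal. -/
theorem compl_cycleGraph_odd_extremal (k : ℕ) (hk : 4 ≤ k) :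
    (∀ G : SimpleGraph (Fin (2 * k - 2)),
      ¬ ((∀ v, (G.neighborSet v).ncard = 2 * k - 4) ∧ G.chromaticNumber = k)) ∧
    (∀ (n : ℕ) (G : SimpleGraph (Fin n)),
      (∀ v, (G.neighborSet v).ncard = 2 * k - 4) → G.chromaticNumber = k →
        2 * k - 1 ≤ n) ∧
    (SimpleGraph.cycleGraph (2 * k - 1))ᶜ.IsRegularOfDegree (2 * k - 4) ∧
    (SimpleGraph.cycleGraph (2 * k - 1))ᶜ.chromaticNumber = k := by
  classical
  have order (n : ℕ) (G : SimpleGraph (Fin n))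
      (hreg : ∀ v, (G.neighborSet v).ncard = 2 * k - 4) (hχ : G.chromaticNumber = k) :
      2 * k - 1 ≤ n := by
    have hG := isRegularOfDegree_of_ncard_neighborSet hreg
    simpa using hG.two_mul_sub_one_le_card_of_chromaticNumber_eq hk hχ
  refine ⟨fun G ⟨hreg, hχ⟩ => ?_, order, ?_, ?_⟩
  · have := order _ G hreg hχ
    omega
  · simpa [show 2 * k - 1 - 3 = 2 * k - 4 by omega] using
      isRegularOfDegree_compl_cycleGraph (n := 2 * k - 1) (by omega)
  · rw [chromaticNumber_compl_cycleGraph (by omega), show (2 * k - 1 + 1) / 2 = k by omega]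
end

section
/- Let a, t ≥ 2 and 1 ≤ c < a. The graph G_{a,c,t}, obtained from the Turán graph T_{at,t} by choosing vertices u_1,...,u_c in part V_1 and v_1,...,v_c in part V_2, deleting all edges u_i v_j with i ≠ j, and adding all edges among {u_1,...,u_c} and all edges among {v_1,...,v_c}, is a(t−1)-regular, has a clique of size t+c−1, and has chromatic number exactly t+c−1. -/
/-- The graph `G_{a,c,t}`: obtained from the Turán graph `T_{at,t}` (complete
`t`-partite, parts `V_i = {i} × Fin a`) by choosing `u_i = (0, i)` for `i < c` and
`v_i = (1, i)` for `i < c`, deleting all edges `u_i v_j` with `i ≠ j`, and adding all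
edges among the `u_i` and all edges among the `v_i`. -/
def Gact (a c t : ℕ) : SimpleGraph (Fin t × Fin a) where
  Adj u v := u ≠ v ∧
    (((u.1 : ℕ) ≠ (v.1 : ℕ) ∧
       ¬((u.1 : ℕ) = 0 ∧ (u.2 : ℕ) < c ∧ (v.1 : ℕ) = 1 ∧ (v.2 : ℕ) < c ∧ u.2 ≠ v.2) ∧
       ¬((v.1 : ℕ) = 0 ∧ (v.2 : ℕ) < c ∧ (u.1 : ℕ) = 1 ∧ (u.2 : ℕ) < c ∧ v.2 ≠ u.2)) ∨
     ((u.1 : ℕ) = 0 ∧ (v.1 : ℕ) = 0 ∧ (u.2 : ℕ) < c ∧ (v.2 : ℕ) < c) ∨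
     ((u.1 : ℕ) = 1 ∧ (v.1 : ℕ) = 1 ∧ (u.2 : ℕ) < c ∧ (v.2 : ℕ) < c))
  symm := by
    constructor
    rintro u v ⟨h1, ⟨hne, hd1, hd2⟩ | ⟨q1, q2, q3, q4⟩ | ⟨r1, r2, r3, r4⟩⟩
    · exact ⟨h1.symm, Or.inl ⟨hne.symm, hd2, hd1⟩⟩
    · exact ⟨h1.symm, Or.inr (Or.inl ⟨q2, q1, q4, q3⟩)⟩
    · exact ⟨h1.symm, Or.inr (Or.inr ⟨r2, r1, r4, r3⟩)⟩
  loopless := ⟨fun u h => h.1 rfl⟩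

/-!
For `v = u_i` (or `v = v_i`), exchanging `u_j ↔ v_j` for all `j ≠ i` is an involution of the
vertex set carrying the vertices outside the part of `v` onto the neighbourhood of `v`; so every
vertex has the degree `a(t-1)` it has in the Turán graph. The clique `u_1, …, u_c, x_2, …, x_t`
and a colouring in which `u_{j+1}` and `v_j` share a colour give matching bounds on the
chromatic number.
-/

theorem SimpleGraph.isNClique_image_of_pairwise_adj {V ι : Type*} [DecidableEq V] [Fintype ι]
    {G : SimpleGraph V} {f : ι → V} (hf : Pairwise fun i j => G.Adj (f i) (f j)) :
    G.IsNClique (Fintype.card ι) (Finset.univ.image f) := by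
  let e : Copy (⊤ : SimpleGraph ι) G := ⟨⟨f, fun h => hf h⟩, Hom.injective_of_top_hom _⟩
  exact Finset.map_eq_image e.toEmbedding _ ▸ isNClique_map_copy_top e

theorem ncard_setOf_fst_ne {α β : Type*} [Fintype α] [Fintype β] (x : α) :
    {w : α × β | w.1 ≠ x}.ncard = (Fintype.card α - 1) * Fintype.card β := by
  classical
  have : {w : α × β | w.1 ≠ x} = ↑((Finset.univ.erase x) ×ˢ (Finset.univ : Finset β)) := by
    ext w; simp
  rw [this, Set.ncard_coe_finset, Finset.card_product,
    Finset.card_erase_of_mem (Finset.mem_univ _), Finset.card_univ, Finset.card_univ]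

open SimpleGraph

namespace Gact

variable {a c t : ℕ}

theorem adj_iff (u v : Fin t × Fin a) : (Gact a c t).Adj u v ↔
    ((u.1 : ℕ) ≠ v.1 ∨ (u.2 : ℕ) ≠ v.2) ∧
    (((u.1 : ℕ) ≠ v.1 ∧
       ¬((u.1 : ℕ) = 0 ∧ (u.2 : ℕ) < c ∧ (v.1 : ℕ) = 1 ∧ (v.2 : ℕ) < c ∧ (u.2 : ℕ) ≠ v.2) ∧
       ¬((v.1 : ℕ) = 0 ∧ (v.2 : ℕ) < c ∧ (u.1 : ℕ) = 1 ∧ (u.2 : ℕ) < c ∧ (v.2 : ℕ) ≠ u.2)) ∨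
     ((u.1 : ℕ) = 0 ∧ (v.1 : ℕ) = 0 ∧ (u.2 : ℕ) < c ∧ (v.2 : ℕ) < c) ∨
     ((u.1 : ℕ) = 1 ∧ (v.1 : ℕ) = 1 ∧ (u.2 : ℕ) < c ∧ (v.2 : ℕ) < c)) := by
  simp only [Gact, ne_eq, Prod.ext_iff, Fin.ext_iff, not_and_or]

/-- For a vertex `v = u_i` or `v = v_i`, exchange `u_j ↔ v_j` for all `j ≠ i`; every other
vertex is fixed. -/
def switch (c : ℕ) (ht : 2 ≤ t) (v w : Fin t × Fin a) : Fin t × Fin a :=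
  if (v.1 : ℕ) ≤ 1 ∧ (v.2 : ℕ) < c ∧ (w.1 : ℕ) ≤ 1 ∧ (w.2 : ℕ) < c ∧ w.2 ≠ v.2 then
    (⟨1 - w.1, by omega⟩, w.2)
  else w

theorem switch_involutive (ht : 2 ≤ t) (v : Fin t × Fin a) :
    Function.Involutive (switch c ht v) := by
  intro w
  unfold switch
  split_ifs <;> simp_all [Prod.ext_iff, Fin.ext_iff]
  omega

theorem adj_iff_switch (ht : 2 ≤ t) (v w : Fin t × Fin a) :
    (Gact a c t).Adj v w ↔ (switch c ht v w).1 ≠ v.1 := by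
  rw [adj_iff]
  unfold switch
  split_ifs with h <;> simp only [ne_eq, Fin.ext_iff] at h ⊢ <;> omega

theorem neighborSet_eq_image_switch (ht : 2 ≤ t) (v : Fin t × Fin a) :
    (Gact a c t).neighborSet v = switch c ht v '' {w | w.1 ≠ v.1} := by
  rw [(switch_involutive ht v).image_eq_preimage_symm]
  ext w
  exact adj_iff_switch ht v w

/-- The clique `{u_j | j < c} ∪ {(1, c)} ∪ {(i, 0) | 2 ≤ i < t}`. -/
def cliqueVertex (ht : 2 ≤ t) (hca : c < a) : Fin c ⊕ Option (Fin (t - 2)) → Fin t × Fin a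
  | .inl j => (⟨0, by omega⟩, ⟨j, by omega⟩)
  | .inr none => (⟨1, by omega⟩, ⟨c, hca⟩)
  | .inr (some i) => (⟨i + 2, by omega⟩, ⟨0, by omega⟩)

theorem pairwise_adj_cliqueVertex (ht : 2 ≤ t) (hca : c < a) :
    Pairwise fun x y => (Gact a c t).Adj (cliqueVertex ht hca x) (cliqueVertex ht hca y) := by
  rintro (j | _ | i) (j' | _ | i') hne <;>
    simp only [ne_eq, Sum.inl.injEq, Sum.inr.injEq, Option.some.injEq, reduceCtorEq,
      Fin.ext_iff, not_true_eq_false] at hne <;>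
    simp only [adj_iff, cliqueVertex, true_and] <;> omega

/-- Colour `V_i` by `i`, except that `u_{j+1}` and `v_j` share the extra colour `j`. -/
def coloring (c : ℕ) : (Gact a c t).Coloring (Fin t ⊕ Fin (c - 1)) :=
  SimpleGraph.Coloring.mk
    (fun w =>
      if h : (w.1 : ℕ) = 0 ∧ 1 ≤ (w.2 : ℕ) ∧ (w.2 : ℕ) < c then .inr ⟨w.2 - 1, by omega⟩
      else if h : (w.1 : ℕ) = 1 ∧ (w.2 : ℕ) < c - 1 then .inr ⟨w.2, h.2⟩
      else .inl w.1)
    (by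
      intro u v huv
      rw [adj_iff] at huv
      split_ifs <;> simp only [ne_eq, reduceCtorEq, Sum.inr.injEq, Sum.inl.injEq, Fin.ext_iff,
        not_false_eq_true] <;> omega)

theorem ncard_neighborSet (ht : 2 ≤ t) (v : Fin t × Fin a) :
    ((Gact a c t).neighborSet v).ncard = a * (t - 1) := by
  rw [neighborSet_eq_image_switch ht,
    Set.ncard_image_of_injective _ (switch_involutive ht v).injective, ncard_setOf_fst_ne,
    Fintype.card_fin, Fintype.card_fin, mul_comm]

theorem isNClique_image_cliqueVertex (ht : 2 ≤ t) (hca : c < a) :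
    (Gact a c t).IsNClique (t + c - 1) (Finset.univ.image (cliqueVertex ht hca)) := by
  have hcard : Fintype.card (Fin c ⊕ Option (Fin (t - 2))) = t + c - 1 := by
    rw [Fintype.card_sum, Fintype.card_option, Fintype.card_fin, Fintype.card_fin]
    omega
  exact hcard ▸ isNClique_image_of_pairwise_adj (pairwise_adj_cliqueVertex ht hca)

theorem colorable (hc1 : 1 ≤ c) : (Gact a c t).Colorable (t + c - 1) := by
  have hcard : Fintype.card (Fin t ⊕ Fin (c - 1)) = t + c - 1 := by
    rw [Fintype.card_sum, Fintype.card_fin, Fintype.card_fin]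
    omega
  exact hcard ▸ (coloring c).colorable

end Gact

open Gact in
theorem Gact_properties_general (a c t : ℕ) (ht : 2 ≤ t) (hc1 : 1 ≤ c)
    (hca : c < a) :
    (∀ v, ((Gact a c t).neighborSet v).ncard = a * (t - 1)) ∧
    (∃ s : Finset (Fin t × Fin a), (Gact a c t).IsNClique (t + c - 1) s) ∧
    (Gact a c t).chromaticNumber = (t + c - 1 : ℕ) := by
  have hclique := isNClique_image_cliqueVertex ht hca
  refine ⟨ncard_neighborSet ht, ⟨_, hclique⟩, le_antisymm ?_ ?_⟩
  · exact (colorable hc1).chromaticNumber_le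
  · exact hclique.card_eq ▸ hclique.isClique.card_le_chromaticNumber

/-- For `a, t ≥ 2` and `1 ≤ c < a`, the graph `G_{a,c,t}` is `a(t−1)`-regular, has a
clique of size `t+c−1`, and has chromatic number exactly `t+c−1`. -/
theorem Gact_properties (a c t : ℕ) (ha : 2 ≤ a) (ht : 2 ≤ t) (hc1 : 1 ≤ c)
    (hca : c < a) :
    (∀ v, ((Gact a c t).neighborSet v).ncard = a * (t - 1)) ∧
    (∃ s : Finset (Fin t × Fin a), (Gact a c t).IsNClique (t + c - 1) s) ∧
    (Gact a c t).chromaticNumber = (t + c - 1 : ℕ) :=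
  Gact_properties_general a c t ht hc1 hca
end
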